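/- Let $D_1, \dots, D_n \in [0,1]$ and $Y \in [0,1]$ with $\sum_{i=1}^n D_i \ge Y$. Then $1 - \prod_{i=1}^n (1 - D_i) \ge Y/2$. -/
import Mathlib

theorem one_sub_prod_ge_half (n : ℕ) (D : Fin n → ℝ) (Y : ℝ)
    (h0 : ∀ i, 0 ≤ D i) (h1 : ∀ i, D i ≤ 1)
    (hY0 : 0 ≤ Y) (hY1 : Y ≤ 1) (hsum : Y ≤ ∑ i, D i) :
    1 - ∏ i, (1 - D i) ≥ Y / 2 := by
  have hprod : ∏ i, (1 - D i) ≤ Real.exp (-∑ i, D i) := by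
    rw [← Finset.sum_neg_distrib, Real.exp_sum]
    apply Finset.prod_le_prod
    · intro i _; linarith [h1 i]
    · intro i _
      have := Real.add_one_le_exp (-D i)
      linarith
  have h2 : Real.exp (-∑ i, D i) ≤ Real.exp (-Y) := by
    apply Real.exp_le_exp.2; linarith
  have h3 : Real.exp (-Y) ≤ 1 / (1 + Y) := by
    rw [Real.exp_neg, inv_eq_one_div]
    exact one_div_le_one_div_of_le (by linarith) (by linarith [Real.add_one_le_exp Y])
  have h4 : 1 / (1 + Y) ≤ 1 - Y / 2 := by
    rw [div_le_iff₀ (by linarith)]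
    nlinarith
  linarith
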